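/- arXiv:2010.08347 — 3 statements merged into one kernel-verified Lean document; each statement's English description precedes it below -/
import Mathlib

section
/- In a finite-state Markov chain, almost surely a run eventually enters a bottom strongly connected component and visits every state of that BSCC infinitely often. -/
/-!
Almost surely every step of a run follows an edge `s → t` with `P s t > 0`, and for every such
edge a run visiting `s` infinitely often also visits `t` infinitely often: if `t` is avoided
from time `m` on, then each of the first `k` visits to `s` after `m` fails to move to `t`, which
by the Markov property at the times of these visits has probability at most `(1 - P s t) ^ k`.
For a run with both properties the set of states it visits infinitely often is closed under
edges, and it is strongly connected because the run eventually stays inside it; so it is a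
BSCC which the run never leaves after some time.
-/

open MeasureTheory

def Adj {S : Type*} (P : S → S → ℝ) (s t : S) : Prop := 0 < P s t

def StronglyConn {S : Type*} (r : S → S → Prop) (K : Set S) : Prop :=
  K.Nonempty ∧ ∀ s ∈ K, ∀ t ∈ K,
    Relation.ReflTransGen (fun a b => r a b ∧ a ∈ K ∧ b ∈ K) s t

def IsSCC {S : Type*} (r : S → S → Prop) (K : Set S) : Prop :=
  StronglyConn r K ∧ ∀ K' : Set S, K ⊆ K' → StronglyConn r K' → K' = K

def IsBSCC {S : Type*} (r : S → S → Prop) (K : Set S) : Prop :=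
  IsSCC r K ∧ ∀ s ∈ K, ∀ t, r s t → t ∈ K

def Cyl {S : Type*} (w : List S) : Set (ℕ → S) :=
  {ρ | ∀ i : ℕ, ∀ h : i < w.length, ρ i = w.get ⟨i, h⟩}

open Filter Set Function

section

variable {S : Type*}

section Cylinders

def finPrefix (n : ℕ) (ρ : ℕ → S) : Fin n → S := fun i => ρ i

lemma cyl_ofFn {n : ℕ} (u : Fin n → S) : Cyl (List.ofFn u) = finPrefix n ⁻¹' {u} := by
  ext ρ
  simp [Cyl, finPrefix, funext_iff, Fin.forall_iff]

lemma cyl_append_singleton (w : List S) (b : S) :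
    Cyl (w ++ [b]) = Cyl w ∩ {ρ | ρ w.length = b} := by
  ext ρ
  simp only [Cyl, List.get_eq_getElem, mem_inter_iff, mem_ofPred_eq, List.length_append,
    List.length_singleton]
  constructor
  · intro h
    refine ⟨fun i hi => by simpa [List.getElem_append_left hi] using h i (by omega), ?_⟩
    simpa using h w.length (by omega)
  · rintro ⟨hw, hb⟩ i hi
    rcases Nat.lt_succ_iff_lt_or_eq.1 hi with hi | rfl
    · simpa [List.getElem_append_left hi] using hw i hi
    · simpa using hb

lemma finPrefix_preimage_image {n : ℕ} {E : Set (ℕ → S)} (hE : DependsOn (· ∈ E) (Iio n)) :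
    finPrefix n ⁻¹' (finPrefix n '' E) = E := by
  refine Subset.antisymm ?_ (subset_preimage_image _ _)
  rintro ρ ⟨ρ', hρ', heq⟩
  exact Eq.mp (hE fun i hi => congrFun heq ⟨i, hi⟩) hρ'

variable [MeasurableSpace S]

lemma measurable_finPrefix (n : ℕ) : Measurable (finPrefix n : (ℕ → S) → Fin n → S) :=
  measurable_pi_lambda _ fun i => measurable_pi_apply (i : ℕ)

lemma measurableSet_of_dependsOn [Finite S] [MeasurableSingletonClass S] {n : ℕ}
    {E : Set (ℕ → S)} (hE : DependsOn (· ∈ E) (Iio n)) : MeasurableSet E := by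
  rw [← finPrefix_preimage_image hE]
  exact measurable_finPrefix n (Set.toFinite _).measurableSet

end Cylinders

section Graph

variable {r : S → S → Prop}

lemma isBSCC_of_stronglyConn {K : Set S} (hK : StronglyConn r K)
    (hclosed : ∀ s ∈ K, ∀ t, r s t → t ∈ K) : IsBSCC r K := by
  refine ⟨⟨hK, fun K' hKK' hK' => Subset.antisymm (fun y hy => ?_) hKK'⟩, hclosed⟩
  obtain ⟨x, hx⟩ := hK.1
  have hreach : ∀ z, Relation.ReflTransGen (fun a b => r a b ∧ a ∈ K' ∧ b ∈ K') x z → z ∈ K := by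
    intro z hz
    induction hz with
    | refl => exact hx
    | tail _ hstep ih => exact hclosed _ ih _ hstep.1
  exact hreach y (hK'.2 x (hKK' hx) y hy)

lemma eventually_frequently_eq [Finite S] (ρ : ℕ → S) :
    ∀ᶠ n in atTop, ∃ᶠ k in atTop, ρ k = ρ n := by
  have h : ∀ x, ∀ᶠ n in atTop, (∃ᶠ k in atTop, ρ k = x) ∨ ρ n ≠ x := fun x => by
    by_cases hx : ∃ᶠ k in atTop, ρ k = x
    · exact Eventually.of_forall fun _ => Or.inl hx
    · exact (not_frequently.1 hx).mono fun _ => Or.inr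
  filter_upwards [eventually_all.2 h] with n hn
  exact (hn (ρ n)).resolve_right (not_not.2 rfl)

lemma stronglyConn_setOf_frequently [Finite S] {ρ : ℕ → S} (hstep : ∀ n, r (ρ n) (ρ (n + 1))) :
    StronglyConn r {x | ∃ᶠ n in atTop, ρ n = x} := by
  obtain ⟨N, hN⟩ := eventually_atTop.1 (eventually_frequently_eq ρ)
  refine ⟨⟨ρ N, hN N le_rfl⟩, fun x hx y hy => ?_⟩
  obtain ⟨i, hi, rfl⟩ := frequently_atTop.1 hx N
  obtain ⟨j, hij, rfl⟩ := frequently_atTop.1 hy i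
  clear hx hy
  induction j, hij using Nat.le_induction with
  | base => exact .refl
  | succ j hij ih => exact ih.tail ⟨hstep j, hN j (hi.trans hij), hN (j + 1) (by omega)⟩

lemma exists_isBSCC_eventually_mem [Finite S] {ρ : ℕ → S} (hstep : ∀ n, r (ρ n) (ρ (n + 1)))
    (hclosed : ∀ a b, r a b → (∃ᶠ n in atTop, ρ n = a) → ∃ᶠ n in atTop, ρ n = b) :
    ∃ B : Set S, IsBSCC r B ∧
      ∃ N : ℕ, (∀ n ≥ N, ρ n ∈ B) ∧ ∀ s ∈ B, ∀ m : ℕ, ∃ n ≥ m, ρ n = s := by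
  obtain ⟨N, hN⟩ := eventually_atTop.1 (eventually_frequently_eq ρ)
  exact ⟨_, isBSCC_of_stronglyConn (stronglyConn_setOf_frequently hstep)
    fun a ha b hab => hclosed a b hab ha, N, hN, fun _ hs => frequently_atTop.1 hs⟩

end Graph

section Visits

variable (s t : S) (m : ℕ)

open Classical in
noncomputable def visitCount (ρ : ℕ → S) (n : ℕ) : ℕ :=
  Nat.count (fun i => m ≤ i ∧ ρ i = s) n

def visitsAvoiding (k : ℕ) : Set (ℕ → S) :=
  {ρ | ∃ n, k ≤ visitCount s m ρ n ∧ ∀ i ∈ Icc m n, ρ i ≠ t}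

/-- `j` is the time of the visit number `k` to `s` from time `m` on, counting from `0`. -/
def visitAvoidingAt (k j : ℕ) : Set (ℕ → S) :=
  {ρ | visitCount s m ρ j = k ∧ m ≤ j ∧ ρ j = s ∧ ∀ i ∈ Icc m j, ρ i ≠ t}

variable {s t m}

lemma visitCount_congr {ρ ρ' : ℕ → S} {n : ℕ} (h : ∀ i < n, ρ i = ρ' i) :
    visitCount s m ρ n = visitCount s m ρ' n := by
  classical
  simp only [visitCount, Nat.count_eq_card_filter_range]
  congr 1
  refine Finset.filter_congr fun i hi => ?_
  rw [h i (Finset.mem_range.1 hi)]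

lemma dependsOn_visitAvoidingAt (k j : ℕ) :
    DependsOn (· ∈ visitAvoidingAt s t m k j) (Iio (j + 1)) := by
  intro ρ ρ' h
  have h' : ∀ i ≤ j, ρ i = ρ' i := fun i hi => h i (Nat.lt_succ_of_le hi)
  simp only [visitAvoidingAt, mem_ofPred_eq, mem_Icc]
  rw [visitCount_congr fun i hi => h' i hi.le, h' j le_rfl]
  exact propext <| and_congr_right' <| and_congr_right' <| and_congr_right' <|
    forall₂_congr fun i hi => by rw [h' i hi.2]

lemma pairwise_disjoint_visitAvoidingAt (k : ℕ) :
    Pairwise (Disjoint on visitAvoidingAt s t m k) := by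
  intro j j' hne
  wlog hlt : j < j' generalizing j j'
  · exact (this hne.symm (lt_of_le_of_ne (not_lt.1 hlt) hne.symm)).symm
  refine Set.disjoint_left.2 fun ρ ⟨hk, hm, hs, _⟩ ⟨hk', _⟩ => ?_
  classical
  have := Nat.count_strict_mono (p := fun i => m ≤ i ∧ ρ i = s) ⟨hm, hs⟩ hlt
  simp only [visitCount] at hk hk'
  omega

lemma visitAvoidingAt_subset (k j : ℕ) : visitAvoidingAt s t m k j ⊆ visitsAvoiding s t m k :=
  fun _ ⟨hk, _, _, ht⟩ => ⟨j, hk.ge, ht⟩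

lemma visitsAvoiding_succ_subset (k : ℕ) :
    visitsAvoiding s t m (k + 1) ⊆ ⋃ j, visitAvoidingAt s t m k j ∩ {ρ | ρ (j + 1) ≠ t} := by
  classical
  rintro ρ ⟨n, hn, ht⟩
  set p := fun i => m ≤ i ∧ ρ i = s
  have hcard : ∀ hf : (Set.ofPred p).Finite, k < hf.toFinset.card :=
    fun hf => lt_of_lt_of_le hn (Nat.count_le_card hf n)
  set j := Nat.nth p k
  have hj : j < n := Nat.nth_lt_of_lt_count hn
  obtain ⟨hm, hs⟩ : p j := Nat.nth_mem k hcard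
  refine mem_iUnion.2 ⟨j, ⟨Nat.count_nth hcard, hm, hs, fun i hi => ht i ⟨hi.1, hi.2.trans hj.le⟩⟩,
    ht (j + 1) ⟨by omega, hj⟩⟩

lemma setOf_frequently_subset_visitsAvoiding (k : ℕ) :
    {ρ : ℕ → S | (∃ᶠ n in atTop, ρ n = s) ∧ ∀ n ≥ m, ρ n ≠ t} ⊆ visitsAvoiding s t m k := by
  classical
  rintro ρ ⟨hfreq, ht⟩
  have hinf : (Set.ofPred fun i => m ≤ i ∧ ρ i = s).Infinite :=
    Nat.frequently_atTop_iff_infinite.1 <|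
      (hfreq.and_eventually (eventually_ge_atTop m)).mono fun _ h => ⟨h.2, h.1⟩
  exact ⟨_, (Nat.count_nth_of_infinite hinf k).ge, fun i hi => ht i hi.1⟩

end Visits

section Markov

variable [MeasurableSpace S]

/-- `μ` is the law of a Markov chain with transition matrix `P` and any initial distribution. -/
def IsMarkovChainLaw (P : S → S → ℝ) (μ : Measure (ℕ → S)) : Prop :=
  ∀ (w : List S) (a b : S), μ (Cyl (w ++ [a, b])) = μ (Cyl (w ++ [a])) * ENNReal.ofReal (P a b)

variable {P : S → S → ℝ} {μ : Measure (ℕ → S)}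

namespace IsMarkovChainLaw

lemma measure_cyl_ofFn_append (hμ : IsMarkovChainLaw P μ) {n : ℕ} (u : Fin (n + 1) → S)
    (b : S) :
    μ (Cyl (List.ofFn u ++ [b])) =
      μ (Cyl (List.ofFn u)) * ENNReal.ofReal (P (u (Fin.last n)) b) := by
  rw [List.ofFn_succ', List.concat_eq_append]
  simpa using hμ _ (u (Fin.last n)) b

variable [Fintype S] [MeasurableSingletonClass S]

lemma measure_inter_eq (hμ : IsMarkovChainLaw P μ) {n : ℕ} {s : S} {E : Set (ℕ → S)}
    (hdep : DependsOn (· ∈ E) (Iio (n + 1))) (hs : ∀ ρ ∈ E, ρ n = s) (b : S) :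
    μ (E ∩ {ρ | ρ (n + 1) = b}) = μ E * ENNReal.ofReal (P s b) := by
  classical
  set π := finPrefix (S := S) (n + 1)
  set U := (π '' E).toFinset
  have hE : E = π ⁻¹' U := by simp [U, π, finPrefix_preimage_image hdep]
  have hlast : ∀ u ∈ U, u (Fin.last n) = s := by
    intro u hu
    obtain ⟨ρ, hρ, rfl⟩ := Set.mem_toFinset.1 hu
    exact hs ρ hρ
  have hfiber : ∀ u, MeasurableSet (π ⁻¹' {u}) :=
    fun u => measurable_finPrefix _ (measurableSet_singleton u)
  have hX : MeasurableSet {ρ : ℕ → S | ρ (n + 1) = b} :=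
    measurableSet_eq_fun (measurable_pi_apply _) measurable_const
  calc μ (E ∩ {ρ | ρ (n + 1) = b})
      = ∑ u ∈ U, μ (π ⁻¹' {u} ∩ {ρ | ρ (n + 1) = b}) := by
        rw [hE, ← Measure.restrict_apply' hX,
          ← sum_measure_preimage_singleton _ fun u _ => hfiber u]
        simp only [Measure.restrict_apply (hfiber _)]
    _ = ∑ u ∈ U, μ (π ⁻¹' {u}) * ENNReal.ofReal (P s b) := by
        refine Finset.sum_congr rfl fun u hu => ?_
        have hcyl : π ⁻¹' {u} ∩ {ρ | ρ (n + 1) = b} = Cyl (List.ofFn u ++ [b]) := by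
          rw [cyl_append_singleton, cyl_ofFn, List.length_ofFn]
        rw [hcyl, hμ.measure_cyl_ofFn_append, hlast u hu, cyl_ofFn]
    _ = μ E * ENNReal.ofReal (P s b) := by
        rw [← Finset.sum_mul, sum_measure_preimage_singleton _ fun u _ => hfiber u, ← hE]

lemma measure_inter_ne_le (hμ : IsMarkovChainLaw P μ) (hnn : ∀ s t, 0 ≤ P s t)
    (hrow : ∀ s, ∑ t, P s t = 1) {n : ℕ} {s : S} {E : Set (ℕ → S)}
    (hdep : DependsOn (· ∈ E) (Iio (n + 1))) (hs : ∀ ρ ∈ E, ρ n = s) (t : S) :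
    μ (E ∩ {ρ | ρ (n + 1) ≠ t}) ≤ ENNReal.ofReal (1 - P s t) * μ E := by
  classical
  have hcover : E ∩ {ρ | ρ (n + 1) ≠ t} = ⋃ b ∈ Finset.univ.erase t, E ∩ {ρ | ρ (n + 1) = b} := by
    ext ρ
    simp
  calc μ (E ∩ {ρ | ρ (n + 1) ≠ t})
      ≤ ∑ b ∈ Finset.univ.erase t, μ (E ∩ {ρ | ρ (n + 1) = b}) :=
        hcover ▸ measure_biUnion_finset_le _ _
    _ = ∑ b ∈ Finset.univ.erase t, μ E * ENNReal.ofReal (P s b) :=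
        Finset.sum_congr rfl fun b _ => hμ.measure_inter_eq hdep hs b
    _ = ENNReal.ofReal (1 - P s t) * μ E := by
        rw [← Finset.mul_sum, ← ENNReal.ofReal_sum_of_nonneg fun b _ => hnn s b,
          Finset.sum_erase_eq_sub (Finset.mem_univ t), hrow, mul_comm]

/-- The Markov property at a random time: `H j` is the event that this time equals `j`. -/
lemma measure_iUnion_inter_ne_le (hμ : IsMarkovChainLaw P μ) (hnn : ∀ s t, 0 ≤ P s t)
    (hrow : ∀ s, ∑ t, P s t = 1) {s : S} {H : ℕ → Set (ℕ → S)}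
    (hdep : ∀ j, DependsOn (· ∈ H j) (Iio (j + 1))) (hs : ∀ j, ∀ ρ ∈ H j, ρ j = s)
    (hdisj : Pairwise (Disjoint on H)) (t : S) :
    μ (⋃ j, H j ∩ {ρ | ρ (j + 1) ≠ t}) ≤ ENNReal.ofReal (1 - P s t) * μ (⋃ j, H j) :=
  calc μ (⋃ j, H j ∩ {ρ | ρ (j + 1) ≠ t})
      ≤ ∑' j, μ (H j ∩ {ρ | ρ (j + 1) ≠ t}) := measure_iUnion_le _
    _ ≤ ∑' j, ENNReal.ofReal (1 - P s t) * μ (H j) :=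
        ENNReal.tsum_le_tsum fun j => hμ.measure_inter_ne_le hnn hrow (hdep j) (hs j) t
    _ = ENNReal.ofReal (1 - P s t) * μ (⋃ j, H j) := by
        rw [ENNReal.tsum_mul_left,
          measure_iUnion hdisj fun j => measurableSet_of_dependsOn (hdep j)]

lemma measure_visitsAvoiding_le [IsProbabilityMeasure μ] (hμ : IsMarkovChainLaw P μ)
    (hnn : ∀ s t, 0 ≤ P s t) (hrow : ∀ s, ∑ t, P s t = 1) (s t : S) (m k : ℕ) :
    μ (visitsAvoiding s t m k) ≤ ENNReal.ofReal (1 - P s t) ^ k := by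
  induction k with
  | zero => simpa using prob_le_one
  | succ k ih =>
    calc μ (visitsAvoiding s t m (k + 1))
        ≤ μ (⋃ j, visitAvoidingAt s t m k j ∩ {ρ | ρ (j + 1) ≠ t}) :=
          measure_mono (visitsAvoiding_succ_subset k)
      _ ≤ ENNReal.ofReal (1 - P s t) * μ (⋃ j, visitAvoidingAt s t m k j) :=
          hμ.measure_iUnion_inter_ne_le hnn hrow (dependsOn_visitAvoidingAt k)
            (fun _ _ hρ => hρ.2.2.1) (pairwise_disjoint_visitAvoidingAt k) t
      _ ≤ ENNReal.ofReal (1 - P s t) * ENNReal.ofReal (1 - P s t) ^ k := by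
          gcongr
          exact (measure_mono (iUnion_subset (visitAvoidingAt_subset k))).trans ih
      _ = ENNReal.ofReal (1 - P s t) ^ (k + 1) := (pow_succ' _ _).symm

lemma ae_frequently_of_frequently [IsProbabilityMeasure μ] (hμ : IsMarkovChainLaw P μ)
    (hnn : ∀ s t, 0 ≤ P s t) (hrow : ∀ s, ∑ t, P s t = 1) {s t : S} (hst : Adj P s t) :
    ∀ᵐ ρ ∂μ, (∃ᶠ n in atTop, ρ n = s) → ∃ᶠ n in atTop, ρ n = t := by
  have hq : ENNReal.ofReal (1 - P s t) < 1 :=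
    ENNReal.ofReal_lt_one.2 (by unfold Adj at hst; linarith)
  have hnull : ∀ m, μ {ρ | (∃ᶠ n in atTop, ρ n = s) ∧ ∀ n ≥ m, ρ n ≠ t} = 0 := fun m =>
    le_antisymm (ge_of_tendsto' (ENNReal.tendsto_pow_atTop_nhds_zero_of_lt_one hq) fun k =>
      (measure_mono (setOf_frequently_subset_visitsAvoiding k)).trans
        (hμ.measure_visitsAvoiding_le hnn hrow s t m k)) zero_le
  filter_upwards [ae_all_iff.2 fun m => measure_eq_zero_iff_ae_notMem.1 (hnull m)] with ρ hρ hs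
  refine frequently_atTop.2 fun m => ?_
  by_contra! h
  exact hρ m ⟨hs, h⟩

lemma ae_frequently_of_adj [IsProbabilityMeasure μ] (hμ : IsMarkovChainLaw P μ)
    (hnn : ∀ s t, 0 ≤ P s t) (hrow : ∀ s, ∑ t, P s t = 1) :
    ∀ᵐ ρ ∂μ, ∀ a b, Adj P a b → (∃ᶠ n in atTop, ρ n = a) → ∃ᶠ n in atTop, ρ n = b :=
  ae_all_iff.2 fun a => ae_all_iff.2 fun b => by
    by_cases hab : Adj P a b
    · filter_upwards [hμ.ae_frequently_of_frequently hnn hrow hab] with ρ h using fun _ => h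
    · exact Eventually.of_forall fun _ h => absurd h hab

lemma ae_adj (hμ : IsMarkovChainLaw P μ) (n : ℕ) : ∀ᵐ ρ ∂μ, Adj P (ρ n) (ρ (n + 1)) := by
  have hsub : {ρ : ℕ → S | ¬Adj P (ρ n) (ρ (n + 1))} ⊆
      ⋃ (a) (b) (_ : ¬Adj P a b), {ρ : ℕ → S | ρ n = a} ∩ {ρ | ρ (n + 1) = b} :=
    fun ρ h => mem_iUnion₂.2 ⟨ρ n, ρ (n + 1), mem_iUnion.2 ⟨h, rfl, rfl⟩⟩
  refine measure_mono_null hsub <| measure_iUnion_null fun a => measure_iUnion_null fun b =>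
    measure_iUnion_null fun hab => ?_
  have hdep : DependsOn (· ∈ {ρ : ℕ → S | ρ n = a}) (Iio (n + 1)) := fun ρ ρ' h => by
    simp only [mem_ofPred_eq, h n (Nat.lt_succ_self n)]
  rw [hμ.measure_inter_eq hdep (fun _ h => h) b, ENNReal.ofReal_eq_zero.2 (not_lt.1 hab), mul_zero]

end IsMarkovChainLaw

end Markov

end

/-- In a finite-state Markov chain, almost surely a run eventually enters a bottom SCC
and visits every state of that BSCC infinitely often. -/
theorem stmt5 {S : Type*} [Fintype S] [MeasurableSpace S] [MeasurableSingletonClass S]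
    (P : S → S → ℝ) (hnn : ∀ s t, 0 ≤ P s t) (hrow : ∀ s, ∑ t, P s t = 1)
    (μ : Measure (ℕ → S)) [IsProbabilityMeasure μ]
    (hMarkov : ∀ (w : List S) (a b : S),
      μ (Cyl (w ++ [a, b])) = μ (Cyl (w ++ [a])) * ENNReal.ofReal (P a b)) :
    μ {ρ | ∃ B : Set S, IsBSCC (Adj P) B ∧
        ∃ N : ℕ, (∀ n ≥ N, ρ n ∈ B) ∧ ∀ s ∈ B, ∀ m : ℕ, ∃ n ≥ m, ρ n = s} = 1 := by
  have hμ : IsMarkovChainLaw P μ := hMarkov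
  refine (measure_congr (ae_eq_univ.2 (mem_ae_iff.1 ?_))).trans measure_univ
  filter_upwards [ae_all_iff.2 hμ.ae_adj, hμ.ae_frequently_of_adj hnn hrow] with ρ hstep hclosed
  exact exists_isBSCC_eventually_mem hstep hclosed
end

section
/- Let π be a finite path in a directed graph G (a sequence of vertices with consecutive pairs being edges). If π has a suffix κ such that the graph G_κ induced by the vertices and edges traversed by κ is a bottom SCC of the graph G_π induced by π, then the vertex set of κ is uniquely determined; i.e., any two such suffixes have the same set of vertices. -/
/-- Edge relation of the graph traversed by a finite path (list of vertices):
`(a,b)` is an edge iff it is a pair of consecutive vertices of the list. -/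
def ListAdj {V : Type*} (π : List V) (a b : V) : Prop := (a, b) ∈ π.zip π.tail

/-- Vertex set of a finite path. -/
def Vset {V : Type*} (π : List V) : Set V := {v | v ∈ π}

theorem ListAdj.cons {V : Type*} {π : List V} (x : V) {a b : V}
    (h : ListAdj π a b) : ListAdj (x :: π) a b := by
  cases π with
  | nil => simp [ListAdj] at h
  | cons y π => exact List.mem_cons_of_mem _ h

theorem ListAdj.of_suffix {V : Type*} {κ π : List V} (h : κ <:+ π) {a b : V}
    (hab : ListAdj κ a b) : ListAdj π a b := by
  obtain ⟨l, rfl⟩ := h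
  induction l with
  | nil => exact hab
  | cons x l ih => exact ih.cons x

theorem StronglyConn.mono {S : Type*} {r r' : S → S → Prop} {K : Set S}
    (h : StronglyConn r K) (hr : ∀ a b, r a b → r' a b) : StronglyConn r' K :=
  ⟨h.1, fun s hs t ht =>
    Relation.ReflTransGen.mono (fun _ _ hab => ⟨hr _ _ hab.1, hab.2⟩) _ _ (h.2 s hs t ht)⟩

theorem StronglyConn.subset_of_closed {S : Type*} {r : S → S → Prop} {K L : Set S}
    (hK : StronglyConn r K) (hKL : (K ∩ L).Nonempty)
    (hL : ∀ s ∈ L, ∀ t, r s t → t ∈ L) : K ⊆ L := by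
  obtain ⟨s, hsK, hsL⟩ := hKL
  intro t ht
  have hst := hK.2 s hsK t ht
  clear ht
  induction hst with
  | refl => exact hsL
  | tail _ hstep ih => exact hL _ ih _ hstep.1

theorem Vset_subset_of_suffix {V : Type*} {κ π : List V} (h : κ <:+ π) :
    Vset κ ⊆ Vset π :=
  fun _ hv => h.subset hv

/-- The shorter suffix is closed under the edges of `π`, and the longer one is strongly
connected through it, so it cannot leave it. -/
theorem Vset_eq_of_suffix {V : Type*} {π κ₁ κ₂ : List V} (hsub : κ₂ <:+ κ₁)
    (h1 : κ₁ <:+ π) (hconn : StronglyConn (ListAdj κ₁) (Vset κ₁))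
    (h2 : IsBSCC (ListAdj π) (Vset κ₂)) : Vset κ₁ = Vset κ₂ := by
  have hVsub := Vset_subset_of_suffix hsub
  have hconnπ : StronglyConn (ListAdj π) (Vset κ₁) :=
    hconn.mono fun _ _ => ListAdj.of_suffix h1
  obtain ⟨s, hs⟩ := h2.1.1.1
  exact (hconnπ.subset_of_closed ⟨s, hVsub hs, hs⟩ h2.2).antisymm hVsub

/-- If two suffixes `κ₁`, `κ₂` of a finite path `π` are such that their traversed graphs
are bottom SCCs of the traversed graph of `π`, then they have the same vertex set:
the candidate `K(π)` is well defined. -/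
theorem stmt6 {V : Type*} (π κ₁ κ₂ : List V)
    (h1 : κ₁ <:+ π ∧ IsBSCC (ListAdj π) (Vset κ₁) ∧ StronglyConn (ListAdj κ₁) (Vset κ₁))
    (h2 : κ₂ <:+ π ∧ IsBSCC (ListAdj π) (Vset κ₂) ∧ StronglyConn (ListAdj κ₂) (Vset κ₂)) :
    Vset κ₁ = Vset κ₂ := by
  wlog hsub : κ₂ <:+ κ₁ generalizing κ₁ κ₂
  · have hsub' := (List.suffix_or_suffix_of_suffix h1.1 h2.1).resolve_right hsub
    exact (this κ₂ κ₁ h2 h1 hsub').symm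
  exact Vset_eq_of_suffix hsub h1.1 h1.2.2 h2.2.1
end

section
/- Let π be a finite path in a directed graph and let π' = π·v be its extension by one vertex v already visited by π. If the discovery index of v is at least that of the last vertex of π, then the strongly connected components of G_{π'} coincide with those of G_π together with possibly merged components; specifically, if the last vertex u of π satisfies d_π(u) ≤ d_π(v), then SCCs of G_{π'} equal SCCs of G_π. -/
/-- Discovery index of a vertex `s` along a path `π`: the number of distinct vertices
appearing in the shortest prefix of `π` ending at the first occurrence of `s`. -/
def DIdx {V : Type*} [DecidableEq V] (π : List V) (s : V) : ℕ :=
  ((π.take (π.idxOf s + 1)).toFinset).card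

/-- `a` and `b` lie in the same SCC of the graph with edge relation `r`. -/
def SameSCC {V : Type*} (r : V → V → Prop) (a b : V) : Prop :=
  Relation.ReflTransGen r a b ∧ Relation.ReflTransGen r b a

open Relation

theorem reflTransGen_or_edge_eq {V : Type*} {r : V → V → Prop} {u v : V}
    (huv : ReflTransGen r u v) :
    ReflTransGen (fun a b => r a b ∨ a = u ∧ b = v) = ReflTransGen r := by
  refine le_antisymm (reflTransGen_closed ?_) (ReflTransGen.mono fun a b => Or.inl)
  rintro a b (hab | ⟨rfl, rfl⟩)
  exacts [.single hab, huv]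

namespace ListAdj

variable {V : Type*}

theorem cons_cons {x y a b : V} {l : List V} :
    ListAdj (x :: y :: l) a b ↔ a = x ∧ b = y ∨ ListAdj (y :: l) a b := by
  simp [ListAdj]

theorem append_singleton {π : List V} (hne : π ≠ []) (v : V) :
    ListAdj (π ++ [v]) = fun a b => ListAdj π a b ∨ a = π.getLast hne ∧ b = v := by
  ext a b
  induction π with
  | nil => exact absurd rfl hne
  | cons x l ih =>
    cases l with
    | nil => simp [ListAdj]
    | cons y l =>
      simp only [List.cons_append, cons_cons, List.getLast_cons_cons]
      rw [← List.cons_append, ih (List.cons_ne_nil _ _)]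
      tauto

theorem getElem_succ (π : List V) (i : ℕ) (hi : i + 1 < π.length) :
    ListAdj π π[i] π[i + 1] :=
  List.mem_iff_getElem.2 ⟨i, by simp; omega, by simp⟩

theorem reflTransGen_getElem (π : List V) {i j : ℕ} (hij : i ≤ j) (hj : j < π.length) :
    ReflTransGen (ListAdj π) π[i] π[j] := by
  induction j, hij using Nat.le_induction with
  | base => exact .refl
  | succ j _ ih => exact (ih (by omega)).tail (getElem_succ π j hj)

theorem reflTransGen_of_idxOf_le [DecidableEq V] {π : List V} {u w : V} (hw : w ∈ π)
    (h : π.idxOf u ≤ π.idxOf w) : ReflTransGen (ListAdj π) u w := by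
  simpa only [List.getElem_idxOf] using
    reflTransGen_getElem π h (List.idxOf_lt_length_of_mem hw)

end ListAdj

theorem idxOf_le_idxOf_of_dIdx_le {V : Type*} [DecidableEq V] {π : List V} {u w : V}
    (hu : u ∈ π) (h : DIdx π u ≤ DIdx π w) : π.idxOf u ≤ π.idxOf w := by
  by_contra! hlt
  -- `u` lies in the prefix ending at its own first occurrence, but not in the shorter one of `w`.
  refine h.not_gt (Finset.card_lt_card ((Finset.ssubset_iff_of_subset ?_).2 ⟨u, ?_, ?_⟩))
  · intro x hx
    simp only [List.mem_toFinset] at hx ⊢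
    exact List.take_subset_take_left π (by omega) hx
  · simp [List.mem_take_iff_idxOf_lt hu]
  · simp only [List.mem_toFinset, List.mem_take_iff_idxOf_lt hu]
    omega

theorem stmt17_general {V : Type*} [DecidableEq V] (π : List V) (hne : π ≠ []) (v : V) (hv : v ∈ π)
    (hd : DIdx π (π.getLast hne) ≤ DIdx π v) :
    ∀ a b : V, SameSCC (ListAdj (π ++ [v])) a b ↔ SameSCC (ListAdj π) a b := by
  have hu := List.getLast_mem hne
  have hreach : ReflTransGen (ListAdj π) (π.getLast hne) v :=
    ListAdj.reflTransGen_of_idxOf_le hv (idxOf_le_idxOf_of_dIdx_le hu hd)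
  simp [SameSCC, ListAdj.append_singleton hne, reflTransGen_or_edge_eq hreach]

/-- Extending a path `π` by an already-visited vertex `v` whose discovery index is at
least that of the last vertex `u` of `π` does not change the SCC partition of the
traversed graph. -/
theorem stmt17 {V : Type*} [DecidableEq V] (adj : V → V → Prop)
    (π : List V) (hne : π ≠ []) (v : V) (hv : v ∈ π)
    (hpath : π.Chain' adj) (hedge : adj (π.getLast hne) v)
    (hd : DIdx π (π.getLast hne) ≤ DIdx π v) :
    ∀ a b : V, SameSCC (ListAdj (π ++ [v])) a b ↔ SameSCC (ListAdj π) a b :=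
  stmt17_general π hne v hv hd
end
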